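/- Let P, Q be orthogonal projections on a complex Hilbert space H with ‖P - Q‖ < 1, A := I + P(Q - P)P, and T := Q A^{-1/2} P. Then T is a partial isometry, i.e., T T* T = T. -/

import Mathlib

/-!
`A = 1 + P(Q - P)P = (1 - P) + PQP` is positive, commutes with `P`, and is invertible because
`‖P(Q - P)P‖ ≤ ‖Q - P‖ < 1`. Hence `R = A^{-1/2}` is self-adjoint and commutes with `P`, and
`T*T = PRQRP = R(PQP)R = R(A - (1 - P))R = 1 - (1 - P)A⁻¹ = P`, since `A` is the identity on
the range of `1 - P`. Therefore `TT*T = TP = T`.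
-/

open Ring

theorem Commute.ringInverse_right {M₀ : Type*} [MonoidWithZero M₀] {a b : M₀}
    (h : Commute a b) : Commute a b⁻¹ʳ := by
  by_cases hb : IsUnit b
  · rw [Ring.inverse_of_isUnit hb]
    exact h.units_inv_right
  · rw [Ring.inverse_non_unit b hb]
    exact Commute.zero_right a

section Ring

variable {R : Type*} [Ring R] {p q : R}

theorem one_add_mul_sub_mul_eq (hp : IsIdempotentElem p) :
    1 + p * (q - p) * p = (1 - p) + p * q * p := by
  rw [mul_sub, sub_mul, hp.eq, hp.eq]
  abel

theorem commute_one_add_mul_sub_mul (hp : IsIdempotentElem p) :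
    Commute p (1 + p * (q - p) * p) := by
  rw [one_add_mul_sub_mul_eq hp]
  refine ((Commute.one_right p).sub_right (Commute.refl p)).add_right ?_
  change p * (p * q * p) = p * q * p * p
  rw [← mul_assoc, ← mul_assoc, hp.eq, mul_assoc _ p p, hp.eq]

theorem one_sub_mul_one_add_mul_sub_mul (hp : IsIdempotentElem p) :
    (1 - p) * (1 + p * (q - p) * p) = 1 - p := by
  rw [mul_add, mul_one, ← mul_assoc, ← mul_assoc, sub_mul, one_mul, hp.eq, sub_self,
    zero_mul, zero_mul, add_zero]

theorem mul_mul_mul_mul_eq_self (hp : IsIdempotentElem p) {r : R} (hpr : Commute p r)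
    (hra : Commute r (1 + p * (q - p) * p)) (hr : r * r * (1 + p * (q - p) * p) = 1) :
    p * r * q * r * p = p := by
  set a := 1 + p * (q - p) * p with ha
  have hrar : r * a * r = 1 := by rw [mul_assoc, ← hra.eq, ← mul_assoc, hr]
  have hprr : (1 - p) * (r * r) = 1 - p := by
    calc (1 - p) * (r * r) = (1 - p) * a * (r * r) := by
          rw [one_sub_mul_one_add_mul_sub_mul hp]
      _ = (1 - p) * (r * r * a) := by rw [mul_assoc, ((hra.mul_left hra).symm).eq]
      _ = 1 - p := by rw [hr, mul_one]
  have hpqp : p * q * p = a - (1 - p) := by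
    rw [ha, one_add_mul_sub_mul_eq hp]
    abel
  have h1pr : Commute (1 - p) r := (Commute.one_left r).sub_left hpr
  calc p * r * q * r * p = (p * r) * q * (r * p) := by simp only [mul_assoc]
    _ = (r * p) * q * (p * r) := congrArg₂ (· * q * ·) hpr.eq hpr.symm.eq
    _ = r * (p * q * p) * r := by simp only [mul_assoc]
    _ = r * a * r - (1 - p) * (r * r) := by
        rw [hpqp, mul_sub, sub_mul, ← h1pr.eq, mul_assoc (1 - p)]
    _ = p := by
        rw [hrar, hprr]
        abel

end Ring

theorem mul_star_mul_self_eq_self {R : Type*} [Ring R] [StarRing R] {p q r : R}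
    (hp : IsStarProjection p) (hq : IsStarProjection q) (hr : IsSelfAdjoint r)
    (h : p * r * q * r * p = p) :
    q * r * p * star (q * r * p) * (q * r * p) = q * r * p := by
  rw [star_mul, star_mul, hp.isSelfAdjoint.star_eq, hq.isSelfAdjoint.star_eq, hr.star_eq]
  calc q * r * p * (p * (r * q)) * (q * r * p)
        = q * r * ((p * p) * r * (q * q) * r * p) := by noncomm_ring
    _ = q * r * p := by rw [hp.isIdempotentElem.eq, hq.isIdempotentElem.eq, h]

theorem one_add_mul_sub_mul_nonneg {R : Type*} [Ring R] [StarRing R] [PartialOrder R]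
    [StarOrderedRing R] {p q : R} (hp : IsStarProjection p) (hq : 0 ≤ q) :
    0 ≤ 1 + p * (q - p) * p := by
  rw [one_add_mul_sub_mul_eq hp.isIdempotentElem]
  exact add_nonneg hp.one_sub_nonneg (hp.isSelfAdjoint.conjugate_nonneg hq)

theorem isUnit_one_add_mul_sub_mul {R : Type*} [NormedRing R] [HasSummableGeomSeries R]
    {p q : R} (hp : ‖p‖ ≤ 1) (hpq : ‖p - q‖ < 1) : IsUnit (1 + p * (q - p) * p) := by
  have hlt : ‖-(p * (q - p) * p)‖ < 1 := by
    rw [norm_neg, norm_sub_rev] at *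
    calc ‖p * (q - p) * p‖ ≤ ‖p‖ * ‖q - p‖ * ‖p‖ := norm_mul₃_le
      _ ≤ 1 * ‖q - p‖ * 1 := by gcongr
      _ < 1 := by simpa using hpq
  simpa using (Units.oneSub _ hlt).isUnit

section CStarAlgebra

variable {A : Type*} [CStarAlgebra A] [PartialOrder A] [StarOrderedRing A]

theorem Commute.ringInverse_sqrt {a b : A} (h : Commute a b) : Commute (CFC.sqrt a)⁻¹ʳ b :=
  (h.cfcₙ_nnreal NNReal.sqrt).symm.ringInverse_right.symm

theorem ringInverse_sqrt_mul_self_mul {a : A} (ha : 0 ≤ a) (hu : IsUnit a) :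
    (CFC.sqrt a)⁻¹ʳ * (CFC.sqrt a)⁻¹ʳ * a = 1 := by
  rw [← Ring.mul_inverse_rev' (Commute.refl _), CFC.sqrt_mul_sqrt_self a ha,
    Ring.inverse_mul_cancel a hu]

end CStarAlgebra

theorem stmt_6 (H : Type*) [NormedAddCommGroup H] [InnerProductSpace ℂ H] [CompleteSpace H]
    (P Q : H →L[ℂ] H)
    (hP : IsIdempotentElem P) (hP' : IsSelfAdjoint P)
    (hQ : IsIdempotentElem Q) (hQ' : IsSelfAdjoint Q)
    (h : ‖P - Q‖ < 1) :
    (Q * Ring.inverse (CFC.sqrt (1 + P * (Q - P) * P)) * P) *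
      star (Q * Ring.inverse (CFC.sqrt (1 + P * (Q - P) * P)) * P) *
        (Q * Ring.inverse (CFC.sqrt (1 + P * (Q - P) * P)) * P) =
      Q * Ring.inverse (CFC.sqrt (1 + P * (Q - P) * P)) * P := by
  have hPp : IsStarProjection P := ⟨hP, hP'⟩
  have hQp : IsStarProjection Q := ⟨hQ, hQ'⟩
  set A := 1 + P * (Q - P) * P
  have hA : 0 ≤ A := one_add_mul_sub_mul_nonneg hPp hQp.nonneg
  have hAu : IsUnit A := isUnit_one_add_mul_sub_mul (hPp.norm_le P) h
  have hPA : Commute P A := commute_one_add_mul_sub_mul hP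
  have hTT : P * (CFC.sqrt A)⁻¹ʳ * Q * (CFC.sqrt A)⁻¹ʳ * P = P :=
    mul_mul_mul_mul_eq_self hP hPA.symm.ringInverse_sqrt.symm (Commute.refl A).ringInverse_sqrt
      (ringInverse_sqrt_mul_self_mul hA hAu)
  exact mul_star_mul_self_eq_self hPp hQp (CFC.sqrt_nonneg A).isSelfAdjoint.ringInverse hTT
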